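/- arXiv:1611.01288 — 3 statements merged into one kernel-verified Lean document; each statement's English description precedes it below -/
import Mathlib

section
/- Let f : ℕ → ℝ be 2-additive, i.e. f(k) = Σ_{j : k_j = 1} f(2^j) for every k ∈ ℕ with binary digits k = Σ_{j≥0} k_j 2^j (in particular f(0) = 0). Then for every V ∈ ℕ, V ≥ 1: |Σ_{v=0}^{V−1} e(f(v))| ≤ Σ_{r=0}^{⌊log₂V⌋} ∏_{j=0}^{r−1} |1 + e(f(2^j))| = Σ_{r=0}^{⌊log₂V⌋} 2^r ∏_{j=0}^{r−1} |cos(π f(2^j))|, where e(t) = exp(2πit). -/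
/-! For `2`-additive `f`, the function `g = e ∘ f` satisfies `g (2^L + b) = g (2^L) * g b`
for `b < 2^L`. Hence the sum of `g` over a dyadic block `[0, 2^L)` factors as
`∏_{j<L} (1 + g (2^j))`, and writing `V = 2^L + W` with `W < 2^L` splits the sum over `[0, V)`
into such a product plus `g (2^L)` times the sum over `[0, W)`, which has modulus at most the
sum over `[0, W)` because `|g| = 1`. Induction on `L` gives the bound for `V < 2^L`; finally
`|1 + e(t)| = |e(-t/2) + e(t/2)| = 2 |cos (π t)|`. -/

open Real

noncomputable section

def eFun (t : ℝ) : ℂ := Complex.exp (2 * π * Complex.I * t)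

open Finset

lemma eFun_zero : eFun 0 = 1 := by
  simp [eFun]

lemma eFun_add (a b : ℝ) : eFun (a + b) = eFun a * eFun b := by
  rw [eFun, eFun, eFun, ← Complex.exp_add]
  push_cast
  ring_nf

lemma norm_eFun (t : ℝ) : ‖eFun t‖ = 1 := by
  rw [eFun, ← Complex.norm_exp_ofReal_mul_I (2 * π * t)]
  push_cast
  ring_nf

lemma eFun_neg_add_eFun (t : ℝ) : eFun (-t) + eFun t = 2 * Real.cos (2 * π * t) := by
  rw [eFun, eFun, Complex.ofReal_cos, Complex.two_cos]
  push_cast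
  ring_nf

lemma norm_one_add_eFun (t : ℝ) : ‖1 + eFun t‖ = 2 * |Real.cos (π * t)| := by
  have h : 1 + eFun t = eFun (t / 2) * (eFun (-(t / 2)) + eFun (t / 2)) := by
    rw [mul_add, ← eFun_add, ← eFun_add, add_neg_cancel, add_halves, eFun_zero]
  rw [h, norm_mul, norm_eFun, one_mul, eFun_neg_add_eFun,
    show 2 * π * (t / 2) = π * t by ring, norm_mul, Complex.norm_two, Complex.norm_real,
    Real.norm_eq_abs]

section BinaryDigits

variable {M : Type*} [AddCommMonoid M]

lemma sum_range_testBit_eq_of_lt_two_pow (a : ℕ → M) {k m n : ℕ} (hk : k < 2 ^ m)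
    (hmn : m ≤ n) :
    ∑ j ∈ range n, (if k.testBit j then a j else 0) =
      ∑ j ∈ range m, (if k.testBit j then a j else 0) := by
  refine (sum_subset (range_subset_range.2 hmn) fun j _ hj => ?_).symm
  have : k < 2 ^ j := hk.trans_le (Nat.pow_le_pow_right two_pos (by simpa using hj))
  simp [Nat.testBit_lt_two_pow this]

lemma sum_range_succ_testBit_two_pow_add (a : ℕ → M) {L b : ℕ} (hb : b < 2 ^ L) :
    ∑ j ∈ range (L + 1), (if (2 ^ L + b).testBit j then a j else 0) =
      a L + ∑ j ∈ range L, (if b.testBit j then a j else 0) := by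
  rw [sum_range_succ, Nat.testBit_two_pow_add_eq, Nat.testBit_lt_two_pow hb, add_comm]
  congr 1
  refine sum_congr rfl fun j hj => ?_
  rw [Nat.testBit_two_pow_add_gt (mem_range.1 hj)]

end BinaryDigits

def IsTwoAdditive {M : Type*} [AddCommMonoid M] (f : ℕ → M) : Prop :=
  ∀ k, f k = ∑ j ∈ range (k + 1), if k.testBit j then f (2 ^ j) else 0

namespace IsTwoAdditive

variable {M : Type*} [AddCommMonoid M] {f : ℕ → M}

lemma eq_sum_range_of_lt_two_pow (hf : IsTwoAdditive f) {k m : ℕ} (hk : k < 2 ^ m) :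
    f k = ∑ j ∈ range m, if k.testBit j then f (2 ^ j) else 0 := by
  have hk' : k < 2 ^ (k + 1) := (Nat.lt_succ_self k).trans Nat.lt_two_pow_self
  rw [hf k, ← sum_range_testBit_eq_of_lt_two_pow _ hk' (le_max_left _ m),
    sum_range_testBit_eq_of_lt_two_pow _ hk (le_max_right _ m)]

lemma map_zero (hf : IsTwoAdditive f) : f 0 = 0 := by
  simpa using hf 0

lemma map_two_pow_add (hf : IsTwoAdditive f) {L b : ℕ} (hb : b < 2 ^ L) :
    f (2 ^ L + b) = f (2 ^ L) + f b := by
  have hlt : 2 ^ L + b < 2 ^ (L + 1) := by rw [pow_succ]; omega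
  rw [hf.eq_sum_range_of_lt_two_pow hlt, sum_range_succ_testBit_two_pow_add _ hb,
    ← hf.eq_sum_range_of_lt_two_pow hb]

end IsTwoAdditive

section TwoMultiplicative

variable {R : Type*}

lemma sum_range_two_pow_add_mul [CommSemiring R] {g : ℕ → R}
    (hmul : ∀ L b, b < 2 ^ L → g (2 ^ L + b) = g (2 ^ L) * g b) {L W : ℕ} (hW : W ≤ 2 ^ L) :
    ∑ w ∈ range W, g (2 ^ L + w) = g (2 ^ L) * ∑ w ∈ range W, g w := by
  rw [mul_sum]
  exact sum_congr rfl fun w hw => hmul L w ((mem_range.1 hw).trans_le hW)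

lemma sum_range_two_pow_eq_prod [CommSemiring R] {g : ℕ → R} (h0 : g 0 = 1)
    (hmul : ∀ L b, b < 2 ^ L → g (2 ^ L + b) = g (2 ^ L) * g b) (L : ℕ) :
    ∑ v ∈ range (2 ^ L), g v = ∏ j ∈ range L, (1 + g (2 ^ j)) := by
  induction L with
  | zero => simp [h0]
  | succ L ih =>
    rw [pow_succ, mul_two, sum_range_add, sum_range_two_pow_add_mul hmul le_rfl, ih,
      prod_range_succ]
    ring

lemma sum_range_two_pow_add [CommSemiring R] {g : ℕ → R} (h0 : g 0 = 1)
    (hmul : ∀ L b, b < 2 ^ L → g (2 ^ L + b) = g (2 ^ L) * g b) {L W : ℕ} (hW : W ≤ 2 ^ L) :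
    ∑ v ∈ range (2 ^ L + W), g v =
      ∏ j ∈ range L, (1 + g (2 ^ j)) + g (2 ^ L) * ∑ w ∈ range W, g w := by
  rw [sum_range_add, sum_range_two_pow_eq_prod h0 hmul, sum_range_two_pow_add_mul hmul hW]

lemma norm_sum_range_le_of_lt_two_pow [NormedCommRing R] [NormOneClass R] {g : ℕ → R}
    (h0 : g 0 = 1) (hmul : ∀ L b, b < 2 ^ L → g (2 ^ L + b) = g (2 ^ L) * g b)
    (hnorm : ∀ j, ‖g (2 ^ j)‖ ≤ 1) {V L : ℕ} (hV : V < 2 ^ L) :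
    ‖∑ v ∈ range V, g v‖ ≤ ∑ r ∈ range L, ∏ j ∈ range r, ‖1 + g (2 ^ j)‖ := by
  induction L generalizing V with
  | zero => simp [Nat.lt_one_iff.1 hV]
  | succ L ih =>
    have hprod_nonneg : 0 ≤ ∏ j ∈ range L, ‖1 + g (2 ^ j)‖ :=
      prod_nonneg fun _ _ => norm_nonneg _
    rw [sum_range_succ]
    rcases lt_or_ge V (2 ^ L) with hVL | hVL
    · linarith [ih hVL]
    · obtain ⟨W, rfl⟩ := Nat.exists_eq_add_of_le hVL
      have hW : W < 2 ^ L := by rw [pow_succ] at hV; omega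
      rw [sum_range_two_pow_add h0 hmul hW.le]
      calc ‖∏ j ∈ range L, (1 + g (2 ^ j)) + g (2 ^ L) * ∑ w ∈ range W, g w‖
          ≤ ∏ j ∈ range L, ‖1 + g (2 ^ j)‖ + ‖∑ w ∈ range W, g w‖ := by
            refine (norm_add_le _ _).trans (add_le_add (norm_prod_le _ _) ?_)
            exact (norm_mul_le _ _).trans
              (mul_le_of_le_one_left (norm_nonneg _) (hnorm L))
        _ ≤ _ := by linarith [ih hW]

end TwoMultiplicative

theorem abs_expSum_le_of_twoAdditive_general (f : ℕ → ℝ)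
    (hf : ∀ k : ℕ, f k = ∑ j ∈ Finset.range (k + 1),
      if k.testBit j then f (2 ^ j) else 0)
    (V : ℕ) :
    ‖∑ v ∈ Finset.range V, eFun (f v)‖ ≤
      (∑ r ∈ Finset.range (Nat.log 2 V + 1),
        ∏ j ∈ Finset.range r, ‖1 + eFun (f (2 ^ j))‖) ∧
    (∑ r ∈ Finset.range (Nat.log 2 V + 1),
        ∏ j ∈ Finset.range r, ‖1 + eFun (f (2 ^ j))‖) =
      ∑ r ∈ Finset.range (Nat.log 2 V + 1),
        2 ^ r * ∏ j ∈ Finset.range r, |Real.cos (π * f (2 ^ j))| := by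
  have hf : IsTwoAdditive f := hf
  refine ⟨norm_sum_range_le_of_lt_two_pow (g := fun v => eFun (f v)) ?_ ?_ ?_
    (Nat.lt_pow_succ_log_self one_lt_two V), sum_congr rfl fun r _ => ?_⟩
  · rw [hf.map_zero, eFun_zero]
  · intro L b hb
    rw [hf.map_two_pow_add hb, eFun_add]
  · exact fun j => (norm_eFun _).le
  · simp_rw [norm_one_add_eFun, prod_mul_distrib, prod_const, card_range]

/-- Lemma 2.3 (key estimate): if `f : ℕ → ℝ` is `2`-additive, i.e. `f(k)` equals the
sum of `f(2^j)` over the binary digits `k_j = 1` of `k`, then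
`|Σ_{v<V} e(f(v))| ≤ Σ_{r=0}^{⌊log₂ V⌋} ∏_{j<r} |1 + e(f(2^j))|
  = Σ_{r=0}^{⌊log₂ V⌋} 2^r ∏_{j<r} |cos(π f(2^j))|`. -/
theorem abs_expSum_le_of_twoAdditive (f : ℕ → ℝ)
    (hf : ∀ k : ℕ, f k = ∑ j ∈ Finset.range (k + 1),
      if k.testBit j then f (2 ^ j) else 0)
    (V : ℕ) (hV : 1 ≤ V) :
    ‖∑ v ∈ Finset.range V, eFun (f v)‖ ≤
      (∑ r ∈ Finset.range (Nat.log 2 V + 1),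
        ∏ j ∈ Finset.range r, ‖1 + eFun (f (2 ^ j))‖) ∧
    (∑ r ∈ Finset.range (Nat.log 2 V + 1),
        ∏ j ∈ Finset.range r, ‖1 + eFun (f (2 ^ j))‖) =
      ∑ r ∈ Finset.range (Nat.log 2 V + 1),
        2 ^ r * ∏ j ∈ Finset.range r, |Real.cos (π * f (2 ^ j))| :=
  abs_expSum_le_of_twoAdditive_general f hf V

end
end

section
/- Let α ∈ ℝ be irrational with bounded continued fraction coefficients. Then there exists a constant C = C(α) > 0 such that for all positive integers K, H, N with K ≤ N and H ≤ N: Σ_{ℓ=1}^{⌊log₂K⌋} Σ_{h=1}^{⌊H/2^ℓ⌋} 1/(h·‖2^ℓ α h‖) ≤ C·H·log K. -/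
/-!
The partial quotients of `α` are `⌊(fract vₙ)⁻¹⌋`, where `v₀ = α` and `vₙ₊₁ = (fract vₙ)⁻¹` are
its complete quotients, so if they are bounded by `B` then every `fract vₙ` exceeds
`ε = 1/(B+1)`. For `γ = fract v` and `0 < p < q` one has
`q γ - p = -γ (p fract γ⁻¹ - (q - p ⌊γ⁻¹⌋))`, which passes from the approximation of `γ` with
denominator `q` to that of the next complete quotient with the smaller denominator `p`; strong
induction on `q` then shows `q ‖q α‖ ≥ ε/4`. Hence each term of the inner sum is at most
`2^ℓ · 4/ε`, the inner sum is at most `4H/ε`, and there are `⌊log₂ K⌋` values of `ℓ`.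
-/

open Real

noncomputable section

/-- `‖t‖`: the distance from `t` to the nearest integer. -/
def distNearestInt (t : ℝ) : ℝ := |t - (round t : ℝ)|

/-- `α` has bounded continued fraction coefficients: the partial quotients of its
continued fraction expansion are bounded. -/
def BoundedCF (α : ℝ) : Prop :=
  ∃ B : ℝ, ∀ i : ℕ, ∀ b ∈ ((GenContFract.of α).partDens.get? i), b ≤ B

def completeQuotient (v : ℝ) (n : ℕ) : ℝ := (fun x => (Int.fract x)⁻¹)^[n] v

theorem Irrational.fract {v : ℝ} (hv : Irrational v) : Irrational (Int.fract v) :=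
  hv.sub_intCast ⌊v⌋

namespace completeQuotient

theorem succ (v : ℝ) (n : ℕ) : completeQuotient v (n + 1) = completeQuotient (Int.fract v)⁻¹ n :=
  rfl

theorem irrational {v : ℝ} (hv : Irrational v) (n : ℕ) : Irrational (completeQuotient v n) := by
  induction n generalizing v with
  | zero => exact hv
  | succ n ih => exact ih hv.fract.inv

theorem partDens_get? {v : ℝ} (hv : Irrational v) (n : ℕ) :
    (GenContFract.of v).partDens.get? n =
      some (⌊(Int.fract (completeQuotient v n))⁻¹⌋ : ℝ) := by
  induction n generalizing v with
  | zero => exact GenContFract.partDen_eq_s_b (GenContFract.of_s_head hv.fract.ne_zero)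
  | succ n ih =>
    rw [succ, ← ih hv.fract.inv]
    simp only [GenContFract.partDens, Stream'.Seq.map_get?, GenContFract.of_s_succ]

end completeQuotient

theorem mul_sub_eq_neg_mul_mul_fract_inv_sub (γ x y : ℝ) (hγ : γ ≠ 0) :
    x * γ - y = -(γ * (y * Int.fract γ⁻¹ - (x - y * ⌊γ⁻¹⌋))) := by
  rw [Int.fract]
  field_simp
  ring

theorem half_le_one_sub_of_le_fract_inv {ε γ : ℝ} (hγ₀ : 0 < γ) (hγ₁ : γ < 1) (hε₁ : ε ≤ 1)
    (hε : ε ≤ Int.fract γ⁻¹) : ε / 2 ≤ 1 - γ := by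
  have hfloor : (1 : ℝ) ≤ ⌊γ⁻¹⌋ := by
    exact_mod_cast Int.le_floor.2 (by exact_mod_cast (one_le_inv₀ hγ₀).2 hγ₁.le)
  have hinv : γ * (1 + ε) ≤ 1 := by
    have : 1 + ε ≤ γ⁻¹ := by rw [← Int.floor_add_fract γ⁻¹]; linarith
    calc γ * (1 + ε) ≤ γ * γ⁻¹ := by gcongr
      _ = 1 := mul_inv_cancel₀ hγ₀.ne'
  nlinarith

theorem le_sq_mul_abs_mul_sub_of_abs_eq_mul {ε γ E : ℝ} {p q : ℕ} (hε₀ : 0 ≤ ε) (hε₁ : ε ≤ 1)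
    (hγ : 0 < γ) (hp : 0 < p) (hpq : p < q) (hE : ε * (p + 1) ≤ 4 * p ^ 2 * E)
    (hγE : |q * γ - p| = γ * E) : ε * (q + 1) ≤ 4 * q ^ 2 * |q * γ - p| := by
  have hp1 : (1 : ℝ) ≤ p := by exact_mod_cast hp
  have hpq1 : (p : ℝ) + 1 ≤ q := by exact_mod_cast hpq
  have hE₀ : 0 ≤ E := by
    have := abs_nonneg ((q : ℝ) * γ - p)
    rw [hγE] at this
    exact nonneg_of_mul_nonneg_right (by linarith) hγ
  have hpγ : (p : ℝ) ≤ γ * (q + E) := by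
    have := neg_abs_le ((q : ℝ) * γ - p)
    rw [hγE] at this
    linarith
  have hslack : ε * ((p + 1) * (q + 1)) ≤ 4 * p * q * (q - p) := by
    have : ((p : ℝ) + 1) * (q + 1) ≤ 4 * p * q := by nlinarith
    nlinarith
  have hcoef : 0 ≤ 4 * (p : ℝ) * q ^ 2 - ε * (q + 1) := by nlinarith
  have hlow : ε * (q + 1) * q * (4 * p ^ 2) ≤ ε * (p + 1) * (4 * p * q ^ 2 - ε * (q + 1)) := by
    nlinarith [mul_le_mul_of_nonneg_left hslack hε₀]
  have hgoal : ε * (q + 1) * (q + E) ≤ 4 * p * q ^ 2 * E := by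
    nlinarith [mul_le_mul_of_nonneg_right hE hcoef]
  rw [hγE]
  nlinarith [mul_le_mul_of_nonneg_left hpγ (by positivity : (0 : ℝ) ≤ 4 * q ^ 2 * E)]

/-- The slack `ε` in `ε * (q + 1)`, rather than `ε * q`, absorbs the loss at each step of the
recursion `q ↦ p` along the complete quotients. -/
theorem le_sq_mul_abs_mul_fract_sub {ε v : ℝ} (hε₀ : 0 < ε)
    (hε : ∀ n, ε ≤ Int.fract (completeQuotient v n)) {q : ℕ} (hq : 0 < q) (p : ℤ) :
    ε * (q + 1) ≤ 4 * q ^ 2 * |q * Int.fract v - p| := by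
  induction q using Nat.strong_induction_on generalizing v p with
  | _ q ih =>
  set γ := Int.fract v
  have hγ : ε ≤ γ := hε 0
  have hγ₀ : 0 < γ := hε₀.trans_le hγ
  have hγ₁ : γ < 1 := Int.fract_lt_one v
  have hq1 : (1 : ℝ) ≤ q := by exact_mod_cast hq
  have hεq : ε * (q + 1) ≤ 2 * q ^ 2 * ε := by
    rw [mul_comm _ ε]; gcongr; nlinarith
  rcases le_or_gt p 0 with hp | hp
  · have hγ_le : γ ≤ |q * γ - p| := by
      have : (p : ℝ) ≤ 0 := by exact_mod_cast hp
      exact le_abs.2 (Or.inl (by nlinarith))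
    calc ε * (q + 1) ≤ 4 * q ^ 2 * ε := by nlinarith [sq_nonneg (q : ℝ)]
      _ ≤ 4 * q ^ 2 * |q * γ - p| := by gcongr; linarith
  rcases le_or_gt (q : ℤ) p with hqp | hpq
  · have hhalf : ε / 2 ≤ 1 - γ :=
      half_le_one_sub_of_le_fract_inv hγ₀ hγ₁ (by linarith) (hε 1)
    have h1γ_le : 1 - γ ≤ |q * γ - p| := by
      have : (q : ℝ) ≤ p := by exact_mod_cast hqp
      exact le_abs.2 (Or.inr (by nlinarith))
    calc ε * (q + 1) ≤ 4 * q ^ 2 * (ε / 2) := by linarith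
      _ ≤ 4 * q ^ 2 * |q * γ - p| := by gcongr; linarith
  lift p to ℕ using hp.le
  have hE := ih p (by exact_mod_cast hpq) (v := γ⁻¹) (fun n => hε (n + 1)) (by exact_mod_cast hp)
    (q - p * ⌊γ⁻¹⌋)
  refine le_sq_mul_abs_mul_sub_of_abs_eq_mul hε₀.le (by linarith) hγ₀
    (by exact_mod_cast hp) (by exact_mod_cast hpq) hE ?_
  rw [mul_sub_eq_neg_mul_mul_fract_inv_sub γ _ _ hγ₀.ne', abs_neg, abs_mul,
    abs_of_pos hγ₀]
  push_cast
  rfl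

theorem exists_pos_le_fract_completeQuotient {α : ℝ} (hα : Irrational α) (hcf : BoundedCF α) :
    ∃ ε > 0, ∀ n, ε ≤ Int.fract (completeQuotient α n) := by
  obtain ⟨B, hB⟩ := hcf
  have hγ₀ (n : ℕ) : 0 < Int.fract (completeQuotient α n) :=
    (Int.fract_nonneg _).lt_of_ne' (completeQuotient.irrational hα n).fract.ne_zero
  have hinv (n : ℕ) : (Int.fract (completeQuotient α n))⁻¹ < B + 1 := by
    have hfloor := hB n _ (by rw [completeQuotient.partDens_get? hα n]; rfl)
    linarith [Int.lt_floor_add_one (Int.fract (completeQuotient α n))⁻¹]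
  have hB₀ : 0 < B + 1 := (inv_pos.2 (hγ₀ 0)).trans (hinv 0)
  refine ⟨(B + 1)⁻¹, inv_pos.2 hB₀, fun n => ?_⟩
  rw [inv_le_comm₀ hB₀ (hγ₀ n)]
  exact (hinv n).le

theorem exists_pos_le_mul_distNearestInt {α : ℝ} (hα : Irrational α) (hcf : BoundedCF α) :
    ∃ c > 0, ∀ n : ℕ, 0 < n → c ≤ n * distNearestInt (n * α) := by
  obtain ⟨ε, hε₀, hε⟩ := exists_pos_le_fract_completeQuotient hα hcf
  refine ⟨ε / 4, by positivity, fun n hn => ?_⟩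
  have key := le_sq_mul_abs_mul_fract_sub hε₀ hε hn (round (n * α) - n * ⌊α⌋)
  have hdist : (n : ℝ) * Int.fract α - ((round (n * α) - n * ⌊α⌋ : ℤ) : ℝ) =
      n * α - round (n * α) := by
    push_cast [Int.fract]; ring
  rw [hdist, ← distNearestInt] at key
  have hn1 : (1 : ℝ) ≤ n := by exact_mod_cast hn
  have hd : 0 ≤ distNearestInt (n * α) := abs_nonneg _
  nlinarith

theorem sum_Icc_one_div_mul_distNearestInt_le {α c : ℝ} (hc₀ : 0 < c)
    (hc : ∀ n : ℕ, 0 < n → c ≤ n * distNearestInt (n * α)) {m : ℕ} (hm : 0 < m) (H : ℕ) :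
    ∑ h ∈ Finset.Icc 1 (H / m), 1 / ((h : ℝ) * distNearestInt (m * α * h)) ≤ H / c := by
  have hterm : ∀ h ∈ Finset.Icc 1 (H / m), 1 / ((h : ℝ) * distNearestInt (m * α * h)) ≤ m / c := by
    intro h hh
    have hh₀ : (0 : ℝ) < h := by exact_mod_cast (Finset.mem_Icc.1 hh).1
    have hmh : c ≤ m * (h * distNearestInt (m * α * h)) := by
      have := hc (m * h) (Nat.mul_pos hm (Finset.mem_Icc.1 hh).1)
      rw [show ((m * h : ℕ) : ℝ) * α = m * α * h by push_cast; ring] at this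
      push_cast at this
      linarith
    rw [div_le_div_iff₀ (pos_of_mul_pos_right (hc₀.trans_le hmh) (by positivity)) hc₀]
    linarith
  calc ∑ h ∈ Finset.Icc 1 (H / m), 1 / ((h : ℝ) * distNearestInt (m * α * h))
      ≤ (H / m : ℕ) * (m / c) := by
        simpa using Finset.sum_le_sum hterm
    _ = ((H / m : ℕ) * m : ℕ) / c := by push_cast; ring
    _ ≤ H / c := by gcongr; exact_mod_cast Nat.div_mul_le_self H m

/-- Lemma 2.4, first part: if `α` has bounded continued fraction coefficients then
`Σ_{ℓ=1}^{⌊log₂ K⌋} Σ_{h=1}^{⌊H/2^ℓ⌋} 1/(h ‖2^ℓ α h‖) ≤ C·H·log K`. -/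
theorem sum_inv_distNearestInt_le (α : ℝ) (hirr : Irrational α) (hcf : BoundedCF α) :
    ∃ C > (0:ℝ), ∀ K H N : ℕ, 1 ≤ K → 1 ≤ H → 1 ≤ N → K ≤ N → H ≤ N →
      ∑ l ∈ Finset.Icc 1 (Nat.log 2 K), ∑ h ∈ Finset.Icc 1 (H / 2 ^ l),
          1 / ((h : ℝ) * distNearestInt (2 ^ l * α * h)) ≤
        C * H * Real.log K := by
  obtain ⟨c, hc₀, hc⟩ := exists_pos_le_mul_distNearestInt hirr hcf
  have hlog2 : 0 < Real.log 2 := Real.log_pos one_lt_two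
  refine ⟨1 / (c * Real.log 2), by positivity, fun K H N _ _ _ _ _ => ?_⟩
  calc ∑ l ∈ Finset.Icc 1 (Nat.log 2 K), ∑ h ∈ Finset.Icc 1 (H / 2 ^ l),
          1 / ((h : ℝ) * distNearestInt (2 ^ l * α * h))
      ≤ ∑ l ∈ Finset.Icc 1 (Nat.log 2 K), (H / c : ℝ) := Finset.sum_le_sum fun l _ => by
        exact_mod_cast sum_Icc_one_div_mul_distNearestInt_le hc₀ hc (pow_pos two_pos l) H
    _ = Nat.log 2 K * (H / c) := by simp
    _ ≤ Real.logb 2 K * (H / c) := by gcongr; exact_mod_cast Real.natLog_le_logb K 2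
    _ = 1 / (c * Real.log 2) * H * Real.log K := by rw [Real.logb]; field_simp

end
end

section
/- For Lebesgue-almost every α ∈ (0,1) the following holds: for every ε > 0 there exist C > 0 and N₀ ∈ ℕ such that for all N ≥ N₀ and all positive integers K, H with K ≤ N and H ≤ N: Σ_{ℓ=1}^{⌊log₂K⌋} Σ_{h=1}^{⌊H/2^ℓ⌋} 1/(h·‖2^ℓ α h‖) ≤ C·N^ε. -/
/-!
For `α` uniform on `(0, 1]` and `n ≠ 0`, `nα` is uniform modulo one, so `‖nα‖ ≤ δ` with
probability at most `2δ`. By Borel–Cantelli, `‖nα‖ ≥ (n + 1)⁻²` for all large `n`, and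
`‖nα‖ > 0` almost surely for the finitely many remaining `n`; hence for large `k` every
`‖nα‖` with `n ≤ 2ᵏ` is at least `2⁻⁽²ᵏ⁺²⁾`. Above that scale `‖nα‖⁻¹` is dominated by the
layer-cake sum `∑_{j ≤ 2k+2} 2ʲ⁺¹ 1[‖nα‖ ≤ 2⁻ʲ]`, of expectation `O(k)`, so the whole double sum
with `K = H = 2ᵏ` is dominated by a function of expectation `O(k³)`. Markov's inequality and
Borel–Cantelli along `k` bound the latter by `(k + 1)⁵` eventually, and `(log N)⁵ ≤ N^ε` for
large `N`.
-/

open Real MeasureTheory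

noncomputable section

open Filter Topology Finset

local notation "μ₀" => volume.restrict (Set.Ioc (0:ℝ) 1)

theorem distNearestInt_eq_norm (t : ℝ) : distNearestInt t = ‖(t : UnitAddCircle)‖ :=
  UnitAddCircle.norm_eq.symm

@[fun_prop]
theorem continuous_distNearestInt : Continuous distNearestInt := by
  simp only [funext distNearestInt_eq_norm]
  fun_prop

theorem distNearestInt_le_one (t : ℝ) : distNearestInt t ≤ 1 := by
  rw [distNearestInt_eq_norm]
  exact (AddCircle.norm_le_half_period 1 one_ne_zero).trans (by norm_num)

/-- Since `α ↦ n • α` preserves Haar measure on `ℝ/ℤ`, `nα mod 1` is uniformly distributed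
for `α` uniform on a unit interval. -/
theorem volume_restrict_Ioc_setOf_distNearestInt_mul_le (t : ℝ) {n : ℤ} (hn : n ≠ 0) (δ : ℝ) :
    volume.restrict (Set.Ioc t (t + 1)) {α | distNearestInt (n * α) ≤ δ} =
      ENNReal.ofReal (min 1 (2 * δ)) := by
  have hmp := (Measure.measurePreserving_zsmul (volume : Measure UnitAddCircle) hn).comp
    (UnitAddCircle.measurePreserving_mk t)
  have hset : {α : ℝ | distNearestInt (n * α) ≤ δ} =
      ((fun y : UnitAddCircle => n • y) ∘ ((↑) : ℝ → UnitAddCircle)) ⁻¹' Metric.closedBall 0 δ := by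
    ext α
    simp [distNearestInt_eq_norm, ← zsmul_eq_mul]
  rw [hset, hmp.measure_preimage measurableSet_closedBall.nullMeasurableSet,
    AddCircle.volume_closedBall]

theorem measureReal_setOf_distNearestInt_mul_le {n : ℤ} (hn : n ≠ 0) {δ : ℝ} (hδ : 0 ≤ δ) :
    (μ₀).real {α | distNearestInt (n * α) ≤ δ} ≤ 2 * δ := by
  have := volume_restrict_Ioc_setOf_distNearestInt_mul_le 0 hn δ
  rw [zero_add] at this
  rw [measureReal_def, this, ENNReal.toReal_ofReal (by positivity)]
  exact min_le_right _ _

def dyadicMajorant (J : ℕ) (d : ℝ) : ℝ :=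
  ∑ j ∈ range (J + 1), (Set.Iic ((2:ℝ) ^ j)⁻¹).indicator (fun _ => (2:ℝ) ^ (j + 1)) d

theorem dyadicMajorant_nonneg (J : ℕ) (d : ℝ) : 0 ≤ dyadicMajorant J d :=
  sum_nonneg fun _ _ => Set.indicator_nonneg (fun _ _ => by positivity) _

theorem inv_le_dyadicMajorant {J : ℕ} {d : ℝ} (hJ : ((2:ℝ) ^ J)⁻¹ ≤ d) (hd : d ≤ 1) :
    d⁻¹ ≤ dyadicMajorant J d := by
  induction J with
  | zero =>
    obtain rfl : d = 1 := le_antisymm hd (by simpa using hJ)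
    norm_num [dyadicMajorant]
  | succ J ih =>
    have hmono : dyadicMajorant J d ≤ dyadicMajorant (J + 1) d := by
      unfold dyadicMajorant
      rw [sum_range_succ _ (J + 1)]
      exact le_add_of_nonneg_right (Set.indicator_nonneg (fun _ _ => by positivity) _)
    by_cases hJd : ((2:ℝ) ^ J)⁻¹ ≤ d
    · exact (ih hJd).trans hmono
    · push Not at hJd
      have hd0 : 0 < d := lt_of_lt_of_le (by positivity) hJ
      calc d⁻¹ ≤ (2:ℝ) ^ (J + 1) := by rwa [inv_le_comm₀ hd0 (by positivity)]
        _ = (Set.Iic ((2:ℝ) ^ J)⁻¹).indicator (fun _ => (2:ℝ) ^ (J + 1)) d :=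
          (Set.indicator_of_mem (Set.mem_Iic.2 hJd.le) (fun _ => (2:ℝ) ^ (J + 1))).symm
        _ ≤ dyadicMajorant J d :=
          single_le_sum (f := fun j => (Set.Iic ((2:ℝ) ^ j)⁻¹).indicator
            (fun _ => (2:ℝ) ^ (j + 1)) d)
            (fun _ _ => Set.indicator_nonneg (fun _ _ => by positivity) _) (self_mem_range_succ J)
        _ ≤ dyadicMajorant (J + 1) d := hmono

section Integral

variable {Ω : Type*} [MeasurableSpace Ω] {μ : Measure Ω} [IsFiniteMeasure μ] {f : Ω → ℝ}

theorem integrable_dyadicMajorant_comp (hf : Measurable f) (J : ℕ) :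
    Integrable (fun ω => dyadicMajorant J (f ω)) μ :=
  integrable_finsetSum _ fun _ _ =>
    (integrable_const _).indicator (hf measurableSet_Iic)

theorem integral_dyadicMajorant_comp_le (hf : Measurable f) {C : ℝ}
    (hC : ∀ c, 0 < c → μ.real {ω | f ω ≤ c} ≤ C * c) (J : ℕ) :
    ∫ ω, dyadicMajorant J (f ω) ∂μ ≤ 2 * C * (J + 1) := by
  have hterm : ∀ j, ∫ ω, (Set.Iic ((2:ℝ) ^ j)⁻¹).indicator (fun _ => (2:ℝ) ^ (j + 1)) (f ω) ∂μ
      ≤ 2 * C := fun j => by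
    calc _ = μ.real {ω | f ω ≤ ((2:ℝ) ^ j)⁻¹} * 2 ^ (j + 1) :=
          integral_indicator_const (μ := μ) _ (hf measurableSet_Iic)
      _ ≤ C * ((2:ℝ) ^ j)⁻¹ * 2 ^ (j + 1) := by gcongr; exact hC _ (by positivity)
      _ = 2 * C := by rw [pow_succ]; field_simp
  calc ∫ ω, dyadicMajorant J (f ω) ∂μ
      = ∑ j ∈ range (J + 1),
          ∫ ω, (Set.Iic ((2:ℝ) ^ j)⁻¹).indicator (fun _ => (2:ℝ) ^ (j + 1)) (f ω) ∂μ :=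
        integral_finsetSum _ fun _ _ => (integrable_const _).indicator (hf measurableSet_Iic)
    _ ≤ ∑ _j ∈ range (J + 1), 2 * C := sum_le_sum fun j _ => hterm j
    _ = 2 * C * (J + 1) := by simp; ring

end Integral

theorem ae_eventually_notMem_of_le_div_sq {Ω : Type*} [MeasurableSpace Ω] {μ : Measure Ω}
    {s : ℕ → Set Ω} {c : ℝ} (h : ∀ n, μ (s n) ≤ ENNReal.ofReal (c / ((n:ℝ) + 1) ^ 2)) :
    ∀ᵐ ω ∂μ, ∀ᶠ n in atTop, ω ∉ s n := by
  have hsum : Summable fun n : ℕ => c / ((n:ℝ) + 1) ^ 2 := by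
    have := (summable_nat_add_iff 1).2 (Real.summable_one_div_nat_pow.2 one_lt_two)
    simpa [div_eq_mul_inv] using this.mul_left c
  exact ae_eventually_notMem (ne_top_of_le_ne_top hsum.tsum_ofReal_ne_top (ENNReal.tsum_le_tsum h))

theorem eventually_forall_le_of_eventually_le {f g : ℕ → ℝ} (hf : ∀ n, 1 ≤ n → 0 < f n)
    (hg : Antitone g) (hg0 : Tendsto g atTop (𝓝 0)) (h : ∀ᶠ n in atTop, g n ≤ f n) :
    ∀ᶠ M in atTop, ∀ n, 1 ≤ n → n ≤ M → g M ≤ f n := by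
  obtain ⟨n₀, hn₀⟩ := eventually_atTop.1 h
  have hsmall : ∀ᶠ M in atTop, ∀ n ∈ Icc 1 n₀, g M ≤ f n :=
    (eventually_all_finset _).2 fun n hn => hg0.eventually (ge_mem_nhds (hf n (mem_Icc.1 hn).1))
  filter_upwards [hsmall] with M hM n hn hnM
  by_cases hnn₀ : n ≤ n₀
  · exact hM n (mem_Icc.2 ⟨hn, hnn₀⟩)
  · exact (hg hnM).trans (hn₀ n (by omega))

theorem ae_distNearestInt_mul_pos :
    ∀ᵐ α ∂μ₀, ∀ n : ℕ, 1 ≤ n → 0 < distNearestInt (n * α) := by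
  refine ae_all_iff.2 fun n => ?_
  rcases Nat.eq_zero_or_pos n with rfl | hn
  · exact ae_of_all _ fun _ h => absurd h (by norm_num)
  have hnull : μ₀ {α | distNearestInt ((n:ℤ) * α) ≤ 0} = 0 := by
    simpa only [zero_add, mul_zero, min_eq_right zero_le_one, ENNReal.ofReal_zero] using
      volume_restrict_Ioc_setOf_distNearestInt_mul_le 0 (Nat.cast_ne_zero.2 hn.ne') 0
  filter_upwards [measure_eq_zero_iff_ae_notMem.1 hnull] with α hα _
  simpa using hα

theorem ae_eventually_inv_sq_le_distNearestInt_mul :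
    ∀ᵐ α ∂μ₀,
      ∀ᶠ n : ℕ in atTop, 1 / ((n:ℝ) + 1) ^ 2 ≤ distNearestInt (n * α) := by
  refine (ae_eventually_notMem_of_le_div_sq
    (s := fun n => {α | distNearestInt (n * α) < 1 / ((n:ℝ) + 1) ^ 2}) (c := 2) fun n => ?_).mono
    fun α hα => hα.mono fun n hn => not_lt.1 hn
  rcases Nat.eq_zero_or_pos n with rfl | hn
  · calc _ ≤ μ₀ Set.univ := measure_mono (Set.subset_univ _)
      _ ≤ _ := by simp
  · calc _ ≤ μ₀
            {α | distNearestInt ((n : ℤ) * α) ≤ 1 / ((n:ℝ) + 1) ^ 2} :=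
          measure_mono fun α hα => by simpa using hα.out.le
      _ = _ := by
          simpa only [zero_add] using
            volume_restrict_Ioc_setOf_distNearestInt_mul_le 0 (Nat.cast_ne_zero.2 hn.ne') _
      _ ≤ _ := ENNReal.ofReal_le_ofReal ((min_le_right _ _).trans_eq (mul_one_div _ _))

theorem ae_eventually_forall_inv_two_pow_le_distNearestInt_mul :
    ∀ᵐ α ∂μ₀, ∀ᶠ k : ℕ in atTop,
      ∀ n : ℕ, 1 ≤ n → n ≤ 2 ^ k → ((2:ℝ) ^ (2 * k + 2))⁻¹ ≤ distNearestInt (n * α) := by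
  filter_upwards [ae_distNearestInt_mul_pos, ae_eventually_inv_sq_le_distNearestInt_mul]
    with α hpos hev
  have hg : Antitone fun n : ℕ => 1 / ((n:ℝ) + 1) ^ 2 := fun a b hab => by dsimp only; gcongr
  have hg0 : Tendsto (fun n : ℕ => 1 / ((n:ℝ) + 1) ^ 2) atTop (𝓝 0) := by
    simpa [div_pow] using (tendsto_one_div_add_atTop_nhds_zero_nat (𝕜 := ℝ)).pow 2
  filter_upwards [(tendsto_pow_atTop_atTop_of_one_lt one_lt_two).eventually
    (eventually_forall_le_of_eventually_le hpos hg hg0 hev)] with k hk n hn hnk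
  refine le_trans ?_ (hk n hn hnk)
  rw [one_div, Nat.cast_pow, Nat.cast_ofNat]
  gcongr
  calc ((2:ℝ) ^ k + 1) ^ 2 ≤ (2 ^ k + 2 ^ k) ^ 2 := by gcongr; exact one_le_pow₀ one_le_two
    _ = 2 ^ (2 * k + 2) := by ring

/-- The sum of the theorem for `K = H = 2ᵏ`, with each `‖2ˡαh‖⁻¹` replaced by its dyadic
majorant down to the scale `2⁻⁽²ᵏ⁺²⁾ ≤ (2ᵏ + 1)⁻²`. -/
def majorantSum (k : ℕ) (α : ℝ) : ℝ :=
  ∑ l ∈ Icc 1 k, ∑ h ∈ Icc 1 (2 ^ k / 2 ^ l : ℕ),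
    (h : ℝ)⁻¹ * dyadicMajorant (2 * k + 2) (distNearestInt (2 ^ l * α * h))

theorem majorantSum_nonneg (k : ℕ) (α : ℝ) : 0 ≤ majorantSum k α :=
  sum_nonneg fun _ _ => sum_nonneg fun _ _ =>
    mul_nonneg (by positivity) (dyadicMajorant_nonneg _ _)

theorem sum_le_majorantSum {k K H : ℕ} {α : ℝ}
    (hα : ∀ n : ℕ, 1 ≤ n → n ≤ 2 ^ k → ((2:ℝ) ^ (2 * k + 2))⁻¹ ≤ distNearestInt (n * α))
    (hK : K ≤ 2 ^ k) (hH : H ≤ 2 ^ k) :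
    ∑ l ∈ Icc 1 (Nat.log 2 K), ∑ h ∈ Icc 1 (H / 2 ^ l),
        1 / ((h : ℝ) * distNearestInt (2 ^ l * α * h)) ≤ majorantSum k α := by
  have hterm_nonneg : ∀ l h : ℕ,
      0 ≤ (h : ℝ)⁻¹ * dyadicMajorant (2 * k + 2) (distNearestInt (2 ^ l * α * h)) :=
    fun _ _ => mul_nonneg (by positivity) (dyadicMajorant_nonneg _ _)
  have hlog : Nat.log 2 K ≤ k := by
    simpa [Nat.log_pow] using Nat.log_mono_right (b := 2) hK
  calc _ ≤ ∑ l ∈ Icc 1 (Nat.log 2 K), ∑ h ∈ Icc 1 (H / 2 ^ l),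
          (h : ℝ)⁻¹ * dyadicMajorant (2 * k + 2) (distNearestInt (2 ^ l * α * h)) := by
        refine sum_le_sum fun l _ => sum_le_sum fun h hh => ?_
        obtain ⟨h1, hhH⟩ := mem_Icc.1 hh
        have hn : 2 ^ l * h ≤ 2 ^ k :=
          (mul_comm (2 ^ l) h ▸ (Nat.le_div_iff_mul_le (by positivity)).1 hhH).trans hH
        have hd := hα (2 ^ l * h) (Nat.one_le_iff_ne_zero.2 (by positivity)) hn
        rw [show ((2 ^ l * h : ℕ) : ℝ) * α = 2 ^ l * α * h by push_cast; ring] at hd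
        rw [one_div, mul_inv]
        exact mul_le_mul_of_nonneg_left (inv_le_dyadicMajorant hd (distNearestInt_le_one _))
          (by positivity)
    _ ≤ ∑ l ∈ Icc 1 (Nat.log 2 K), ∑ h ∈ Icc 1 (2 ^ k / 2 ^ l : ℕ),
          (h : ℝ)⁻¹ * dyadicMajorant (2 * k + 2) (distNearestInt (2 ^ l * α * h)) :=
        sum_le_sum fun l _ => sum_le_sum_of_subset_of_nonneg
          (Icc_subset_Icc_right (Nat.div_le_div_right hH)) fun h _ _ => hterm_nonneg l h
    _ ≤ majorantSum k α :=
        sum_le_sum_of_subset_of_nonneg (Icc_subset_Icc_right hlog)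
          fun l _ _ => sum_nonneg fun h _ => hterm_nonneg l h

theorem sum_Icc_inv_le_of_le_two_pow {m k : ℕ} (hm : m ≤ 2 ^ k) :
    ∑ h ∈ Icc 1 m, (h : ℝ)⁻¹ ≤ k + 1 :=
  calc ∑ h ∈ Icc 1 m, (h : ℝ)⁻¹ ≤ ∑ h ∈ Icc 1 (2 ^ k : ℕ), (h : ℝ)⁻¹ :=
        sum_le_sum_of_subset_of_nonneg (Icc_subset_Icc_right hm) fun _ _ _ => by positivity
    _ = harmonic (2 ^ k) := by simp [harmonic_eq_sum_Icc]
    _ ≤ 1 + log ((2 ^ k : ℕ) : ℝ) := harmonic_le_one_add_log _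
    _ ≤ k + 1 := by
        rw [Nat.cast_pow, Nat.cast_ofNat, Real.log_pow]
        nlinarith [Real.log_two_lt_d9, (k.cast_nonneg : (0:ℝ) ≤ k)]

theorem integrable_majorantSum (k : ℕ) :
    Integrable (majorantSum k) μ₀ :=
  integrable_finsetSum _ fun l _ => integrable_finsetSum _ fun h _ =>
    (integrable_dyadicMajorant_comp (by fun_prop) _).const_mul _

theorem integral_majorantSum_le (k : ℕ) :
    ∫ α, majorantSum k α ∂μ₀ ≤ 12 * ((k:ℝ) + 1) ^ 3 := by
  have hmajorant : ∀ l h : ℕ, 1 ≤ h → ∫ α, dyadicMajorant (2 * k + 2)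
      (distNearestInt (2 ^ l * α * h)) ∂μ₀ ≤ 4 * (2 * k + 3) := by
    intro l h hh
    refine (integral_dyadicMajorant_comp_le (by fun_prop)
      (C := 2) (fun c hc => ?_) _).trans_eq (by push_cast; ring)
    have hset : {α : ℝ | distNearestInt (2 ^ l * α * h) ≤ c} =
        {α : ℝ | distNearestInt (((2 ^ l * h : ℤ) : ℝ) * α) ≤ c} := by
      push_cast
      simp only [mul_right_comm]
    rw [hset]
    exact measureReal_setOf_distNearestInt_mul_le (by positivity) hc.le
  have hintegrable : ∀ l h : ℕ, Integrable (fun α => (h : ℝ)⁻¹ * dyadicMajorant (2 * k + 2)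
      (distNearestInt (2 ^ l * α * h))) μ₀ := fun l h =>
    (integrable_dyadicMajorant_comp (by fun_prop) _).const_mul _
  calc ∫ α, majorantSum k α ∂μ₀
      = ∑ l ∈ Icc 1 k, ∑ h ∈ Icc 1 (2 ^ k / 2 ^ l : ℕ), (h : ℝ)⁻¹ * ∫ α, dyadicMajorant
          (2 * k + 2) (distNearestInt (2 ^ l * α * h)) ∂μ₀ := by
        simp only [majorantSum]
        rw [integral_finsetSum _ fun l _ => integrable_finsetSum _ fun h _ => hintegrable l h]
        refine sum_congr rfl fun l _ => ?_
        rw [integral_finsetSum _ fun h _ => hintegrable l h]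
        exact sum_congr rfl fun h _ => integral_const_mul _ _
    _ ≤ ∑ l ∈ Icc 1 k, ∑ h ∈ Icc 1 (2 ^ k / 2 ^ l : ℕ), (h : ℝ)⁻¹ * (4 * (2 * k + 3)) := by
        gcongr with l _ h hh
        exact hmajorant l h (mem_Icc.1 hh).1
    _ ≤ ∑ l ∈ Icc 1 k, ((k : ℝ) + 1) * (4 * (2 * k + 3)) := by
        simp only [← sum_mul]
        gcongr with l
        exact sum_Icc_inv_le_of_le_two_pow (Nat.div_le_self _ _)
    _ ≤ 12 * ((k:ℝ) + 1) ^ 3 := by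
        simp only [sum_const, Nat.card_Icc, add_tsub_cancel_right, nsmul_eq_mul]
        have hk : (0:ℝ) ≤ k := k.cast_nonneg
        nlinarith [mul_nonneg hk (sq_nonneg (k:ℝ))]

theorem ae_eventually_majorantSum_le :
    ∀ᵐ α ∂μ₀,
      ∀ᶠ k : ℕ in atTop, majorantSum k α ≤ ((k:ℝ) + 1) ^ 5 := by
  refine (ae_eventually_notMem_of_le_div_sq
    (s := fun k => {α | ((k:ℝ) + 1) ^ 5 < majorantSum k α}) (c := 12) fun k => ?_).mono
    fun α hα => hα.mono fun k hk => not_lt.1 hk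
  have hT : (0:ℝ) < ((k:ℝ) + 1) ^ 5 := by positivity
  have hmarkov := mul_meas_ge_le_integral_of_nonneg (ae_of_all _ (majorantSum_nonneg k))
    (integrable_majorantSum k) (((k:ℝ) + 1) ^ 5)
  have hreal : (μ₀).real {α | ((k:ℝ) + 1) ^ 5 ≤ majorantSum k α}
      ≤ 12 / ((k:ℝ) + 1) ^ 2 := by
    refine le_of_mul_le_mul_right ?_ hT
    calc _ ≤ 12 * ((k:ℝ) + 1) ^ 3 := by linarith [integral_majorantSum_le k]
      _ = 12 / ((k:ℝ) + 1) ^ 2 * ((k:ℝ) + 1) ^ 5 := by field_simp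
  calc _ ≤ μ₀ {α | ((k:ℝ) + 1) ^ 5 ≤ majorantSum k α} :=
        measure_mono fun _ hα => le_of_lt hα.out
    _ = _ := by rw [ofReal_measureReal]
    _ ≤ _ := ENNReal.ofReal_le_ofReal hreal

theorem eventually_add_two_pow_le_two_pow_rpow (d : ℕ) {ε : ℝ} (hε : 0 < ε) :
    ∀ᶠ L : ℕ in atTop, ((L:ℝ) + 2) ^ d ≤ ((2:ℝ) ^ L) ^ ε := by
  have hr : 1 < (2:ℝ) ^ ε := Real.one_lt_rpow one_lt_two hε
  filter_upwards [(isLittleO_pow_const_const_pow_of_one_lt (R := ℝ) d hr).bound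
    (c := ((2:ℝ) ^ d)⁻¹) (by positivity), eventually_ge_atTop 2] with L hL hL2
  rw [Real.norm_of_nonneg (by positivity), Real.norm_of_nonneg (by positivity)] at hL
  have hL2' : (2:ℝ) ≤ L := by exact_mod_cast hL2
  calc ((L:ℝ) + 2) ^ d ≤ (2 * L) ^ d := by gcongr; linarith
    _ = 2 ^ d * (L:ℝ) ^ d := mul_pow _ _ _
    _ ≤ 2 ^ d * (((2:ℝ) ^ d)⁻¹ * ((2:ℝ) ^ ε) ^ L) := by gcongr
    _ = ((2:ℝ) ^ ε) ^ L := by field_simp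
    _ = ((2:ℝ) ^ L) ^ ε := by
        rw [← Real.rpow_mul_natCast zero_le_two, ← Real.rpow_natCast_mul zero_le_two, mul_comm]

/-- Lemma 2.4, second part: for almost every `α ∈ (0,1)`, for every `ε > 0`,
`Σ_{ℓ=1}^{⌊log₂ K⌋} Σ_{h=1}^{⌊H/2^ℓ⌋} 1/(h ‖2^ℓ α h‖) ≤ C·N^ε` for all large `N`
and all `K, H ≤ N`. -/
theorem sum_inv_distNearestInt_ae :
    ∀ᵐ α ∂(volume : Measure ℝ), α ∈ Set.Ioo (0:ℝ) 1 →
      ∀ ε > (0:ℝ), ∃ C > (0:ℝ), ∃ N₀ : ℕ, ∀ N : ℕ, N₀ ≤ N →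
        ∀ K H : ℕ, 1 ≤ K → 1 ≤ H → K ≤ N → H ≤ N →
          ∑ l ∈ Finset.Icc 1 (Nat.log 2 K), ∑ h ∈ Finset.Icc 1 (H / 2 ^ l),
              1 / ((h : ℝ) * distNearestInt (2 ^ l * α * h)) ≤
            C * (N : ℝ) ^ ε := by
  rw [← ae_restrict_iff' measurableSet_Ioo]
  refine ae_restrict_of_ae_restrict_of_subset Set.Ioo_subset_Ioc_self ?_
  filter_upwards [ae_eventually_forall_inv_two_pow_le_distNearestInt_mul,
    ae_eventually_majorantSum_le] with α hgood hbound ε hε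
  obtain ⟨k₀, hk₀⟩ := eventually_atTop.1
    ((hgood.and hbound).and (eventually_add_two_pow_le_two_pow_rpow 5 hε))
  refine ⟨1, one_pos, 2 ^ k₀, fun N hN K H _ _ hKN hHN => ?_⟩
  have hN0 : N ≠ 0 := Nat.one_le_iff_ne_zero.1 (Nat.one_le_two_pow.trans hN)
  set L := Nat.log 2 N
  have hL : k₀ ≤ L := Nat.le_log_of_pow_le one_lt_two hN
  have hNL : N ≤ 2 ^ (L + 1) := (Nat.lt_pow_succ_log_self one_lt_two N).le
  obtain ⟨⟨hgoodL, hboundL⟩, -⟩ := hk₀ (L + 1) (by omega)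
  calc _ ≤ majorantSum (L + 1) α := sum_le_majorantSum hgoodL (hKN.trans hNL) (hHN.trans hNL)
    _ ≤ ((L:ℝ) + 2) ^ 5 := hboundL.trans_eq (by push_cast; ring)
    _ ≤ ((2:ℝ) ^ L) ^ ε := (hk₀ L hL).2
    _ ≤ (N:ℝ) ^ ε := by
        gcongr
        exact_mod_cast Nat.pow_log_le_self 2 hN0
    _ = 1 * (N:ℝ) ^ ε := (one_mul _).symm

end
end
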